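/- Let K₁ ∈ B(H₁), K₂ ∈ B(H₂), let F₁ : Ω → H₁ be a continuous K₁-frame with bounds 0 < A₁ ≤ B₁ and F₂ : Ω → H₂ a continuous K₂-frame with bounds 0 < A₂ ≤ B₂, with transform operators θ₁, θ₂. If range θ₁ ⊥ range θ₂ in L²(Ω, 𝕜) (i.e. ⟪θ₁ u, θ₂ v⟫_{L²} = 0 for all u ∈ H₁, v ∈ H₂), then F₁ ⊕ F₂ is a continuous (K₁ ⊕ K₂)-frame for H₁ ⊕ H₂: for all (u, v) ∈ H₁ ⊕ H₂, min(A₁, A₂)·‖(K₁ ⊕ K₂)* (u, v)‖² ≤ ∫_Ω |⟪(F₁ ω, F₂ ω), (u, v)⟫|² dμ(ω) ≤ max(B₁, B₂)·‖(u, v)‖². -/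

import Mathlib

open MeasureTheory ContinuousLinearMap

/-! The frame coefficient function of `F₁ ⊕ F₂` at `(u, v)` is `⟪F₁ ·, u⟫ + ⟪F₂ ·, v⟫`, which is
represented in `L²` by `θ₁ u + θ₂ v`. Orthogonality of the ranges gives Pythagoras, so its
`L²` norm squared splits into the two frame integrals; the adjoint of `K₁ ⊕ K₂` is
`K₁* ⊕ K₂*`, so `‖(K₁ ⊕ K₂)* (u, v)‖²` and `‖(u, v)‖²` split the same way, and the bounds add up
with constants `min A₁ A₂` and `max B₁ B₂`. -/

/-- The direct sum operator `K₁ ⊕ K₂` on the super Hilbert space `H₁ ⊕ H₂`, mapping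
`(u, v)` to `(K₁ u, K₂ v)`. -/
noncomputable def prodOp {𝕜 : Type*} [RCLike 𝕜]
    {H₁ : Type*} [NormedAddCommGroup H₁] [InnerProductSpace 𝕜 H₁]
    {H₂ : Type*} [NormedAddCommGroup H₂] [InnerProductSpace 𝕜 H₂]
    (K₁ : H₁ →L[𝕜] H₁) (K₂ : H₂ →L[𝕜] H₂) :
    WithLp 2 (H₁ × H₂) →L[𝕜] WithLp 2 (H₁ × H₂) :=
  ((WithLp.prodContinuousLinearEquiv 2 𝕜 H₁ H₂).symm.toContinuousLinearMap).comp
    ((K₁.prodMap K₂).comp (WithLp.prodContinuousLinearEquiv 2 𝕜 H₁ H₂).toContinuousLinearMap)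

section OrderedArithmetic

variable {α : Type*} [Semiring α] [LinearOrder α] [IsOrderedRing α]

theorem min_mul_add_le_add {a₁ a₂ s₁ s₂ t₁ t₂ : α} (hs₁ : 0 ≤ s₁) (hs₂ : 0 ≤ s₂)
    (h₁ : a₁ * s₁ ≤ t₁) (h₂ : a₂ * s₂ ≤ t₂) : min a₁ a₂ * (s₁ + s₂) ≤ t₁ + t₂ := by
  rw [mul_add]
  exact add_le_add ((mul_le_mul_of_nonneg_right (min_le_left _ _) hs₁).trans h₁)
    ((mul_le_mul_of_nonneg_right (min_le_right _ _) hs₂).trans h₂)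

theorem add_le_max_mul_add {b₁ b₂ s₁ s₂ t₁ t₂ : α} (hs₁ : 0 ≤ s₁) (hs₂ : 0 ≤ s₂)
    (h₁ : t₁ ≤ b₁ * s₁) (h₂ : t₂ ≤ b₂ * s₂) : t₁ + t₂ ≤ max b₁ b₂ * (s₁ + s₂) := by
  rw [mul_add]
  exact add_le_add (h₁.trans (mul_le_mul_of_nonneg_right (le_max_left _ _) hs₁))
    (h₂.trans (mul_le_mul_of_nonneg_right (le_max_right _ _) hs₂))

end OrderedArithmetic

namespace MeasureTheory.L2

variable {Ω : Type*} [MeasurableSpace Ω] {μ : Measure Ω}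

theorem norm_sq_eq_integral_of_ae_eq {E : Type*} [NormedAddCommGroup E] {f : Lp E 2 μ}
    {g : Ω → E} (hg : f =ᵐ[μ] g) : ‖f‖ ^ 2 = ∫ ω, ‖g ω‖ ^ 2 ∂μ := by
  have hf := Lp.aestronglyMeasurable f
  calc ‖f‖ ^ 2 = ∫ ω, ‖f ω‖ ^ 2 ∂μ := by
        rw [Lp.norm_def, toReal_eLpNorm hf,
          lpNorm_eq_integral_norm_rpow_toReal two_ne_zero ENNReal.ofNat_ne_top hf]
        simp only [ENNReal.toReal_ofNat, Real.rpow_two]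
        exact Real.rpow_inv_natCast_pow (integral_nonneg fun _ => sq_nonneg _) two_ne_zero
    _ = ∫ ω, ‖g ω‖ ^ 2 ∂μ := integral_congr_ae (hg.mono fun _ hω => by simp only [hω])

theorem integral_norm_add_sq_of_inner_eq_zero {𝕜 E : Type*} [RCLike 𝕜] [NormedAddCommGroup E]
    [InnerProductSpace 𝕜 E] {f g : Lp E 2 μ} {φ ψ : Ω → E}
    (hf : f =ᵐ[μ] φ) (hg : g =ᵐ[μ] ψ) (hfg : inner 𝕜 f g = 0) :
    ∫ ω, ‖φ ω + ψ ω‖ ^ 2 ∂μ = ∫ ω, ‖φ ω‖ ^ 2 ∂μ + ∫ ω, ‖ψ ω‖ ^ 2 ∂μ := by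
  have hsum : ⇑(f + g) =ᵐ[μ] fun ω => φ ω + ψ ω := (Lp.coeFn_add f g).trans (hf.add hg)
  calc ∫ ω, ‖φ ω + ψ ω‖ ^ 2 ∂μ = ‖f + g‖ ^ 2 := (norm_sq_eq_integral_of_ae_eq hsum).symm
    _ = ‖f‖ ^ 2 + ‖g‖ ^ 2 := by
      simpa only [sq] using norm_add_sq_eq_norm_sq_add_norm_sq_of_inner_eq_zero f g hfg
    _ = ∫ ω, ‖φ ω‖ ^ 2 ∂μ + ∫ ω, ‖ψ ω‖ ^ 2 ∂μ := by
      rw [norm_sq_eq_integral_of_ae_eq hf, norm_sq_eq_integral_of_ae_eq hg]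

end MeasureTheory.L2

section prodOp

variable {𝕜 : Type*} [RCLike 𝕜]
  {H₁ : Type*} [NormedAddCommGroup H₁] [InnerProductSpace 𝕜 H₁]
  {H₂ : Type*} [NormedAddCommGroup H₂] [InnerProductSpace 𝕜 H₂]

theorem norm_prodOp_apply_sq (K₁ : H₁ →L[𝕜] H₁) (K₂ : H₂ →L[𝕜] H₂) (x : WithLp 2 (H₁ × H₂)) :
    ‖prodOp K₁ K₂ x‖ ^ 2 = ‖K₁ x.fst‖ ^ 2 + ‖K₂ x.snd‖ ^ 2 :=
  WithLp.prod_norm_sq_eq_of_L2 _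

theorem adjoint_prodOp [CompleteSpace H₁] [CompleteSpace H₂]
    (K₁ : H₁ →L[𝕜] H₁) (K₂ : H₂ →L[𝕜] H₂) :
    adjoint (prodOp K₁ K₂) = prodOp (adjoint K₁) (adjoint K₂) := by
  refine ((eq_adjoint_iff _ _).mpr fun x y => ?_).symm
  rw [WithLp.prod_inner_apply, WithLp.prod_inner_apply]
  exact congrArg₂ (· + ·) (adjoint_inner_left K₁ _ _) (adjoint_inner_left K₂ _ _)

end prodOp

theorem prod_K_frame_of_orthogonal_ranges_general
    {𝕜 : Type*} [RCLike 𝕜]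
    {H₁ : Type*} [NormedAddCommGroup H₁] [InnerProductSpace 𝕜 H₁] [CompleteSpace H₁]
    {H₂ : Type*} [NormedAddCommGroup H₂] [InnerProductSpace 𝕜 H₂] [CompleteSpace H₂]
    {Ω : Type*} [MeasurableSpace Ω] {μ : Measure Ω}
    (K₁ : H₁ →L[𝕜] H₁) (K₂ : H₂ →L[𝕜] H₂)
    (F₁ : Ω → H₁) (F₂ : Ω → H₂)
    (A₁ B₁ A₂ B₂ : ℝ)
    (hframe₁ : ∀ u : H₁,
      A₁ * ‖ContinuousLinearMap.adjoint K₁ u‖ ^ 2 ≤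
        ∫ ω, ‖(inner 𝕜 (F₁ ω) u : 𝕜)‖ ^ 2 ∂μ ∧
      ∫ ω, ‖(inner 𝕜 (F₁ ω) u : 𝕜)‖ ^ 2 ∂μ ≤ B₁ * ‖u‖ ^ 2)
    (hframe₂ : ∀ v : H₂,
      A₂ * ‖ContinuousLinearMap.adjoint K₂ v‖ ^ 2 ≤
        ∫ ω, ‖(inner 𝕜 (F₂ ω) v : 𝕜)‖ ^ 2 ∂μ ∧
      ∫ ω, ‖(inner 𝕜 (F₂ ω) v : 𝕜)‖ ^ 2 ∂μ ≤ B₂ * ‖v‖ ^ 2)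
    (θ₁ : H₁ →L[𝕜] Lp 𝕜 2 μ)
    (hθ₁ : ∀ u : H₁, (θ₁ u : Ω → 𝕜) =ᵐ[μ] fun ω => (inner 𝕜 (F₁ ω) u : 𝕜))
    (θ₂ : H₂ →L[𝕜] Lp 𝕜 2 μ)
    (hθ₂ : ∀ v : H₂, (θ₂ v : Ω → 𝕜) =ᵐ[μ] fun ω => (inner 𝕜 (F₂ ω) v : 𝕜))
    (hperp : ∀ (u : H₁) (v : H₂), (inner 𝕜 (θ₁ u) (θ₂ v) : 𝕜) = 0) :
    ∀ x : WithLp 2 (H₁ × H₂),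
      min A₁ A₂ * ‖ContinuousLinearMap.adjoint (prodOp K₁ K₂) x‖ ^ 2 ≤
        ∫ ω, ‖(inner 𝕜 ((WithLp.equiv 2 (H₁ × H₂)).symm (F₁ ω, F₂ ω)) x : 𝕜)‖ ^ 2 ∂μ ∧
      ∫ ω, ‖(inner 𝕜 ((WithLp.equiv 2 (H₁ × H₂)).symm (F₁ ω, F₂ ω)) x : 𝕜)‖ ^ 2 ∂μ ≤
        max B₁ B₂ * ‖x‖ ^ 2 := by
  intro x
  have hsplit : ∫ ω, ‖(inner 𝕜 ((WithLp.equiv 2 (H₁ × H₂)).symm (F₁ ω, F₂ ω)) x : 𝕜)‖ ^ 2 ∂μ =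
      ∫ ω, ‖(inner 𝕜 (F₁ ω) x.fst : 𝕜)‖ ^ 2 ∂μ + ∫ ω, ‖(inner 𝕜 (F₂ ω) x.snd : 𝕜)‖ ^ 2 ∂μ :=
    L2.integral_norm_add_sq_of_inner_eq_zero (hθ₁ x.fst) (hθ₂ x.snd) (hperp x.fst x.snd)
  rw [hsplit, adjoint_prodOp, norm_prodOp_apply_sq, WithLp.prod_norm_sq_eq_of_L2]
  exact ⟨min_mul_add_le_add (sq_nonneg _) (sq_nonneg _) (hframe₁ _).1 (hframe₂ _).1,
    add_le_max_mul_add (sq_nonneg _) (sq_nonneg _) (hframe₁ _).2 (hframe₂ _).2⟩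

/-- If `F₁` is a continuous `K₁`-frame with bounds `0 < A₁ ≤ B₁`, `F₂` a continuous
`K₂`-frame with bounds `0 < A₂ ≤ B₂`, with transform operators `θ₁, θ₂`, and
`range θ₁ ⊥ range θ₂` in `L²(Ω, 𝕜)`, then `F₁ ⊕ F₂` is a continuous `(K₁ ⊕ K₂)`-frame
for `H₁ ⊕ H₂` with bounds `min A₁ A₂` and `max B₁ B₂`. -/
theorem prod_K_frame_of_orthogonal_ranges
    {𝕜 : Type*} [RCLike 𝕜] [MeasurableSpace 𝕜] [BorelSpace 𝕜]
    {H₁ : Type*} [NormedAddCommGroup H₁] [InnerProductSpace 𝕜 H₁] [CompleteSpace H₁]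
    {H₂ : Type*} [NormedAddCommGroup H₂] [InnerProductSpace 𝕜 H₂] [CompleteSpace H₂]
    {Ω : Type*} [MeasurableSpace Ω] {μ : Measure Ω}
    (K₁ : H₁ →L[𝕜] H₁) (K₂ : H₂ →L[𝕜] H₂)
    (F₁ : Ω → H₁) (F₂ : Ω → H₂)
    (A₁ B₁ A₂ B₂ : ℝ) (hA₁ : 0 < A₁) (hA₁B₁ : A₁ ≤ B₁) (hA₂ : 0 < A₂) (hA₂B₂ : A₂ ≤ B₂)
    (hmeas₁ : ∀ u : H₁, Measurable fun ω => (inner 𝕜 (F₁ ω) u : 𝕜))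
    (hframe₁ : ∀ u : H₁,
      A₁ * ‖ContinuousLinearMap.adjoint K₁ u‖ ^ 2 ≤
        ∫ ω, ‖(inner 𝕜 (F₁ ω) u : 𝕜)‖ ^ 2 ∂μ ∧
      ∫ ω, ‖(inner 𝕜 (F₁ ω) u : 𝕜)‖ ^ 2 ∂μ ≤ B₁ * ‖u‖ ^ 2)
    (hmeas₂ : ∀ v : H₂, Measurable fun ω => (inner 𝕜 (F₂ ω) v : 𝕜))
    (hframe₂ : ∀ v : H₂,
      A₂ * ‖ContinuousLinearMap.adjoint K₂ v‖ ^ 2 ≤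
        ∫ ω, ‖(inner 𝕜 (F₂ ω) v : 𝕜)‖ ^ 2 ∂μ ∧
      ∫ ω, ‖(inner 𝕜 (F₂ ω) v : 𝕜)‖ ^ 2 ∂μ ≤ B₂ * ‖v‖ ^ 2)
    (θ₁ : H₁ →L[𝕜] Lp 𝕜 2 μ)
    (hθ₁ : ∀ u : H₁, (θ₁ u : Ω → 𝕜) =ᵐ[μ] fun ω => (inner 𝕜 (F₁ ω) u : 𝕜))
    (θ₂ : H₂ →L[𝕜] Lp 𝕜 2 μ)
    (hθ₂ : ∀ v : H₂, (θ₂ v : Ω → 𝕜) =ᵐ[μ] fun ω => (inner 𝕜 (F₂ ω) v : 𝕜))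
    (hperp : ∀ (u : H₁) (v : H₂), (inner 𝕜 (θ₁ u) (θ₂ v) : 𝕜) = 0) :
    ∀ x : WithLp 2 (H₁ × H₂),
      min A₁ A₂ * ‖ContinuousLinearMap.adjoint (prodOp K₁ K₂) x‖ ^ 2 ≤
        ∫ ω, ‖(inner 𝕜 ((WithLp.equiv 2 (H₁ × H₂)).symm (F₁ ω, F₂ ω)) x : 𝕜)‖ ^ 2 ∂μ ∧
      ∫ ω, ‖(inner 𝕜 ((WithLp.equiv 2 (H₁ × H₂)).symm (F₁ ω, F₂ ω)) x : 𝕜)‖ ^ 2 ∂μ ≤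
        max B₁ B₂ * ‖x‖ ^ 2 :=
  prod_K_frame_of_orthogonal_ranges_general K₁ K₂ F₁ F₂ A₁ B₁ A₂ B₂ hframe₁ hframe₂ θ₁ hθ₁ θ₂ hθ₂
    hperp
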